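/- In the Fomin–Kirillov algebra FK(3), the elements ab + ba, ab + bc − ac, and abac are central, and any two of the first two multiply to zero: (ab+ba)² = (ab+bc−ac)² = (ab+ba)(ab+bc−ac) = 0. -/

import Mathlib

/-!
Everything happens in an arbitrary ring containing elements `a, b, c` that satisfy the `FK(3)`
relations; these relations are invariant under `b ↔ c`. An anticommutator `xy + yx` commutes
with `x` and `y` as soon as `x² = y² = 0`, and the two quadratic relations say that the three
anticommutators `ab + ba`, `bc + cb`, `ca + ac` sum to zero, so each of them commutes with all
three generators; moreover `ab + bc - ac = -(ac + ca)`. Multiplying `ab + bc + ca = 0` by `b` on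
the left and by `a` on the right gives the braid relation `bab = aba`, which kills `abab` and
`baba` and yields `(ab + ba)² = 0` and `(ab + ba)(ac + ca) = 0`. Finally
`abac = (ab + ba) · ac` is annihilated on both sides by every generator, hence central.
-/
open FreeAlgebra

/-- The defining relations of the Fomin–Kirillov algebra `FK(3)`. -/
inductive FKRel (k : Type) [Field k] : FreeAlgebra k (Fin 3) → FreeAlgebra k (Fin 3) → Prop
  | sq_a : FKRel k (ι k (0 : Fin 3) * ι k (0 : Fin 3)) 0
  | sq_b : FKRel k (ι k (1 : Fin 3) * ι k (1 : Fin 3)) 0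
  | sq_c : FKRel k (ι k (2 : Fin 3) * ι k (2 : Fin 3)) 0
  | rel1 : FKRel k (ι k (0 : Fin 3) * ι k (1 : Fin 3) + ι k (1 : Fin 3) * ι k (2 : Fin 3) +
      ι k (2 : Fin 3) * ι k (0 : Fin 3)) 0
  | rel2 : FKRel k (ι k (1 : Fin 3) * ι k (0 : Fin 3) + ι k (0 : Fin 3) * ι k (2 : Fin 3) +
      ι k (2 : Fin 3) * ι k (1 : Fin 3)) 0

/-- The Fomin–Kirillov algebra on three generators. -/
abbrev FK3 (k : Type) [Field k] := RingQuot (FKRel k)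

variable (k : Type) [Field k]

/-- The generator `a` of `FK(3)`. -/
noncomputable def FKa : FK3 k := RingQuot.mkAlgHom k (FKRel k) (ι k (0 : Fin 3))
/-- The generator `b` of `FK(3)`. -/
noncomputable def FKb : FK3 k := RingQuot.mkAlgHom k (FKRel k) (ι k (1 : Fin 3))
/-- The generator `c` of `FK(3)`. -/
noncomputable def FKc : FK3 k := RingQuot.mkAlgHom k (FKRel k) (ι k (2 : Fin 3))

structure IsFK3Triple {R : Type*} [Ring R] (a b c : R) : Prop where
  a_mul_self : a * a = 0
  b_mul_self : b * b = 0
  c_mul_self : c * c = 0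
  cyclic : a * b + b * c + c * a = 0
  anticyclic : b * a + a * c + c * b = 0

section Anticommutator

variable {R : Type*} [Ring R] {a : R}

theorem commute_anticomm_left (ha : a * a = 0) (b : R) : Commute (a * b + b * a) a := by
  have h : a * (a * b) = 0 := by rw [← mul_assoc, ha, zero_mul]
  simp only [Commute, SemiconjBy, add_mul, mul_add, mul_assoc, ha, h, mul_zero]
  abel

theorem commute_anticomm_right (b : R) (ha : a * a = 0) : Commute (b * a + a * b) a := by
  rw [add_comm]
  exact commute_anticomm_left ha b

end Anticommutator

namespace IsFK3Triple

variable {R : Type*} [Ring R] {a b c : R}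

theorem swap (h : IsFK3Triple a b c) : IsFK3Triple a c b where
  a_mul_self := h.a_mul_self
  b_mul_self := h.c_mul_self
  c_mul_self := h.b_mul_self
  cyclic := by rw [← h.anticyclic]; abel
  anticyclic := by rw [← h.cyclic]; abel

variable (h : IsFK3Triple a b c)
include h

theorem c_mul_a : c * a = -(a * b + b * c) := by
  rw [eq_neg_iff_add_eq_zero, add_comm, h.cyclic]

theorem c_mul_b : c * b = -(b * a + a * c) := by
  rw [eq_neg_iff_add_eq_zero, add_comm, h.anticyclic]

theorem ab_add_bc_sub_ac_eq : a * b + b * c - a * c = -(a * c + c * a) := by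
  rw [h.c_mul_a]
  abel

theorem anticomm_sum_eq_zero : (a * b + b * a) + (b * c + c * b) + (c * a + a * c) = 0 :=
  calc _ = (a * b + b * c + c * a) + (b * a + a * c + c * b) := by abel
    _ = 0 := by rw [h.cyclic, h.anticyclic, add_zero]

theorem commute_anticomm_c : Commute (a * b + b * a) c := by
  have hsum : a * b + b * a = -((b * c + c * b) + (c * a + a * c)) :=
    eq_neg_of_add_eq_zero_left (by rw [← add_assoc]; exact h.anticomm_sum_eq_zero)
  rw [hsum]
  exact ((commute_anticomm_right b h.c_mul_self).add_left
    (commute_anticomm_left h.c_mul_self a)).neg_left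

theorem bab_eq_aba : b * a * b = a * b * a := by
  have key : b * a * b - a * b * a =
      b * (a * b + b * c + c * a) - (a * b + b * c + c * a) * a - b * b * c + c * (a * a) := by
    noncomm_ring
  rw [h.cyclic, h.b_mul_self, h.a_mul_self] at key
  simpa [sub_eq_zero] using key

theorem abab_eq_zero : a * b * a * b = 0 :=
  calc a * b * a * b = a * (b * a * b) := by noncomm_ring
    _ = a * a * b * a := by rw [h.bab_eq_aba]; noncomm_ring
    _ = 0 := by rw [h.a_mul_self, zero_mul, zero_mul]

theorem baba_eq_zero : b * a * b * a = 0 := by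
  rw [h.bab_eq_aba, mul_assoc, h.a_mul_self, mul_zero]

theorem anticomm_sq_eq_zero : (a * b + b * a) ^ 2 = 0 :=
  calc (a * b + b * a) ^ 2
      = a * b * a * b + a * (b * b) * a + b * (a * a) * b + b * a * b * a := by noncomm_ring
    _ = 0 := by rw [h.abab_eq_zero, h.baba_eq_zero, h.a_mul_self, h.b_mul_self]; simp

theorem anticomm_mul_anticomm_eq_zero : (a * b + b * a) * (a * c + c * a) = 0 :=
  calc (a * b + b * a) * (a * c + c * a)
      = a * b * a * c + b * (a * a) * c - (a * b + b * a) * (a * b + b * c) := by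
        rw [h.c_mul_a]; noncomm_ring
    _ = a * b * a * c - b * a * b * c - a * b * a * b
          + (b * (a * a) * c - a * (b * b) * c - b * (a * a) * b) := by
        noncomm_ring
    _ = 0 := by rw [h.bab_eq_aba, h.abab_eq_zero, h.a_mul_self, h.b_mul_self]; simp

theorem ab_add_bc_sub_ac_sq_eq_zero : (a * b + b * c - a * c) ^ 2 = 0 := by
  rw [h.ab_add_bc_sub_ac_eq, neg_sq]
  exact h.swap.anticomm_sq_eq_zero

theorem anticomm_mul_ab_add_bc_sub_ac_eq_zero : (a * b + b * a) * (a * b + b * c - a * c) = 0 := by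
  rw [h.ab_add_bc_sub_ac_eq, mul_neg, h.anticomm_mul_anticomm_eq_zero, neg_zero]

theorem abac_eq_anticomm_mul : a * b * a * c = (a * b + b * a) * (a * c) := by
  rw [add_mul, mul_assoc b, ← mul_assoc a a, h.a_mul_self]
  noncomm_ring

theorem a_mul_abac_eq_zero : a * (a * b * a * c) = 0 := by
  simp only [← mul_assoc, h.a_mul_self, zero_mul]

theorem abac_mul_c_eq_zero : a * b * a * c * c = 0 := by
  rw [mul_assoc, h.c_mul_self, mul_zero]

theorem b_mul_abac_eq_zero : b * (a * b * a * c) = 0 :=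
  calc b * (a * b * a * c) = b * a * b * a * c := by noncomm_ring
    _ = a * b * (a * a) * c := by rw [h.bab_eq_aba]; noncomm_ring
    _ = 0 := by rw [h.a_mul_self, mul_zero, zero_mul]

theorem abac_mul_b_eq_zero : a * b * a * c * b = 0 :=
  calc a * b * a * c * b = -(a * b * a * b * a + a * b * (a * a) * c) := by
        rw [mul_assoc _ c, h.c_mul_b]; noncomm_ring
    _ = 0 := by rw [h.abab_eq_zero, h.a_mul_self]; simp

theorem abac_mul_a_eq_zero : a * b * a * c * a = 0 :=
  calc a * b * a * c * a = (a * b + b * a) * (a * (a * c + c * a)) := by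
        rw [h.abac_eq_anticomm_mul, mul_add, ← mul_assoc a a, h.a_mul_self]; noncomm_ring
    _ = a * ((a * b + b * a) * (a * c + c * a)) := by
        rw [← mul_assoc, (commute_anticomm_left h.a_mul_self b).eq, mul_assoc]
    _ = 0 := by rw [h.anticomm_mul_anticomm_eq_zero, mul_zero]

theorem c_mul_abac_eq_zero : c * (a * b * a * c) = 0 :=
  calc c * (a * b * a * c) = (a * b + b * a) * ((a * c + c * a) * c) := by
        rw [h.abac_eq_anticomm_mul, add_mul (a * c), mul_assoc a c c, h.c_mul_self, ← mul_assoc,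
          ← h.commute_anticomm_c.eq]; noncomm_ring
    _ = 0 := by rw [← mul_assoc, h.anticomm_mul_anticomm_eq_zero, zero_mul]

theorem commute_abac_a : Commute (a * b * a * c) a :=
  h.abac_mul_a_eq_zero.trans h.a_mul_abac_eq_zero.symm

theorem commute_abac_b : Commute (a * b * a * c) b :=
  h.abac_mul_b_eq_zero.trans h.b_mul_abac_eq_zero.symm

theorem commute_abac_c : Commute (a * b * a * c) c :=
  h.abac_mul_c_eq_zero.trans h.c_mul_abac_eq_zero.symm

end IsFK3Triple

theorem FreeAlgebra.mem_center_of_forall_commute_ι {R X A : Type*} [CommSemiring R] [Semiring A]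
    [Algebra R A] {f : FreeAlgebra R X →ₐ[R] A} (hf : Function.Surjective f) {z : A}
    (hz : ∀ x, Commute z (f (ι R x))) : z ∈ Subalgebra.center R A := by
  have hgen : Algebra.adjoin R (f '' Set.range (ι R)) = ⊤ := by
    rw [Algebra.adjoin_image, FreeAlgebra.adjoin_range_ι, Algebra.map_top, AlgHom.range_eq_top]
    exact hf
  refine Subalgebra.mem_center_iff.mpr fun y => (Algebra.commute_of_mem_adjoin_of_forall_mem_commute
    (by rw [hgen]; exact Algebra.mem_top) ?_).eq.symm
  rintro _ ⟨_, ⟨x, rfl⟩, rfl⟩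
  exact hz x

namespace FK3

variable {k}

theorem isFK3Triple : IsFK3Triple (FKa k) (FKb k) (FKc k) := by
  constructor <;>
  · simp only [FKa, FKb, FKc, ← map_mul, ← map_add,
      ← map_zero (RingQuot.mkAlgHom k (FKRel k))]
    exact RingQuot.mkAlgHom_rel k (by constructor)

theorem mem_center_of_commute {z : FK3 k} (ha : Commute z (FKa k)) (hb : Commute z (FKb k))
    (hc : Commute z (FKc k)) : z ∈ Subalgebra.center k (FK3 k) := by
  refine FreeAlgebra.mem_center_of_forall_commute_ι (RingQuot.mkAlgHom_surjective k (FKRel k)) ?_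
  intro i
  fin_cases i
  exacts [ha, hb, hc]

end FK3

theorem FK3_central_elements :
    (FKa k * FKb k + FKb k * FKa k ∈ Subalgebra.center k (FK3 k)) ∧
    (FKa k * FKb k + FKb k * FKc k - FKa k * FKc k ∈ Subalgebra.center k (FK3 k)) ∧
    (FKa k * FKb k * FKa k * FKc k ∈ Subalgebra.center k (FK3 k)) ∧
    (FKa k * FKb k + FKb k * FKa k) ^ 2 = 0 ∧
    (FKa k * FKb k + FKb k * FKc k - FKa k * FKc k) ^ 2 = 0 ∧
    (FKa k * FKb k + FKb k * FKa k) * (FKa k * FKb k + FKb k * FKc k - FKa k * FKc k) = 0 := by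
  have h := FK3.isFK3Triple (k := k)
  refine ⟨?_, ?_, ?_, h.anticomm_sq_eq_zero, h.ab_add_bc_sub_ac_sq_eq_zero,
    h.anticomm_mul_ab_add_bc_sub_ac_eq_zero⟩
  · exact FK3.mem_center_of_commute (commute_anticomm_left h.a_mul_self _)
      (commute_anticomm_right _ h.b_mul_self) h.commute_anticomm_c
  · rw [h.ab_add_bc_sub_ac_eq]
    exact neg_mem <| FK3.mem_center_of_commute (commute_anticomm_left h.a_mul_self _)
      h.swap.commute_anticomm_c (commute_anticomm_right _ h.c_mul_self)
  · exact FK3.mem_center_of_commute h.commute_abac_a h.commute_abac_b h.commute_abac_c
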